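/- arXiv:1104.5544 — 7 statements merged into one kernel-verified Lean document; each statement's English description precedes it below -/
import Mathlib

section
/- Let G be a graph on the vertex set {1, 2, …, n} and let m be a positive integer such that G contains no complete bipartite graph and no empty bipartite graph between two disjoint vertex sets each of size m (i.e., there are no disjoint U, V ⊆ {1,…,n} with |U| = |V| = m such that every pair (u,v) ∈ U × V is an edge of G, or no pair is). Let 𝒢 be the 3-uniform hypergraph on {1, 2, …, n} whose edges are exactly the triples (i₁, i₂, i₃) with i₁ < i₂ < i₃ such that (i₁, i₂) is an edge of G. Then 𝒢 contains no complete tripartite subgraph and no empty tripartite subgraph with three disjoint parts each of size m. -/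
/-!
Let `w` be the largest vertex of `S₁ ∪ S₂ ∪ S₃`. Every other vertex is smaller than `w`, so for
`u, v` in the two parts not containing `w`, the triple `{u, v, w}` is an edge of the lifted
hypergraph exactly when `uv` is an edge of `G`. A complete (empty) tripartite subgraph therefore
restricts, through `w`, to a complete (empty) bipartite subgraph of `G` between the other two parts.
-/

/-- `e` is an edge of the 3-uniform hypergraph associated to a graph `G` on `{1, …, n}`:
the triples `{i₁, i₂, i₃}` with `i₁ < i₂ < i₃` such that `i₁i₂` is an edge of `G`. -/
def liftEdge {n : ℕ} (G : SimpleGraph (Fin n)) (e : Finset (Fin n)) : Prop :=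
  ∃ i₁ i₂ i₃ : Fin n, i₁ < i₂ ∧ i₂ < i₃ ∧ e = {i₁, i₂, i₃} ∧ G.Adj i₁ i₂

theorem liftEdge_insert_iff {n : ℕ} (G : SimpleGraph (Fin n)) {u v w : Fin n}
    (huv : u ≠ v) (hu : u < w) (hv : v < w) :
    liftEdge G (insert w {u, v}) ↔ G.Adj u v := by
  constructor
  · rintro ⟨i₁, i₂, i₃, h₁₂, h₂₃, he, hadj⟩
    have mem : ∀ x, x = w ∨ x = u ∨ x = v ↔ x = i₁ ∨ x = i₂ ∨ x = i₃ := by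
      simpa [Finset.ext_iff] using he
    have h₃ : i₃ = w := by grind [mem w, mem i₃]
    obtain ⟨rfl, rfl⟩ | ⟨rfl, rfl⟩ : (i₁ = u ∧ i₂ = v) ∨ (i₁ = v ∧ i₂ = u) := by
      grind [mem u, mem v, mem i₁, mem i₂]
    exacts [hadj, hadj.symm]
  · intro hadj
    rcases huv.lt_or_gt with h | h
    · exact ⟨u, v, w, h, hv, by grind, hadj⟩
    · exact ⟨v, u, w, h, hu, by grind, hadj.symm⟩

theorem adj_monochromatic_of_liftEdge_monochromatic {n : ℕ} (G : SimpleGraph (Fin n))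
    {U V : Finset (Fin n)} {w : Fin n} (hUV : Disjoint U V)
    (hU : ∀ u ∈ U, u < w) (hV : ∀ v ∈ V, v < w)
    (h : (∀ u ∈ U, ∀ v ∈ V, liftEdge G (insert w {u, v})) ∨
      (∀ u ∈ U, ∀ v ∈ V, ¬ liftEdge G (insert w {u, v}))) :
    (∀ u ∈ U, ∀ v ∈ V, G.Adj u v) ∨ (∀ u ∈ U, ∀ v ∈ V, ¬ G.Adj u v) := by
  have link : ∀ u ∈ U, ∀ v ∈ V, liftEdge G (insert w {u, v}) ↔ G.Adj u v :=
    fun u hu v hv ↦ liftEdge_insert_iff G (Finset.disjoint_left.mp hUV hu <| · ▸ hv)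
      (hU u hu) (hV v hv)
  exact h.imp (fun h u hu v hv ↦ (link u hu v hv).1 (h u hu v hv))
    (fun h u hu v hv hadj ↦ h u hu v hv ((link u hu v hv).2 hadj))

/-- if a graph `G` on `{1, …, n}` contains no complete and no empty bipartite graph
between two disjoint vertex sets of size `m`, then the 3-uniform hypergraph `𝒢` whose edges are
the triples `i₁ < i₂ < i₃` with `i₁i₂` an edge of `G` contains no complete and no empty
tripartite subgraph with three disjoint parts of size `m`. -/
theorem stmt_8 (n m : ℕ) (hm : 0 < m) (G : SimpleGraph (Fin n))
    (hbip : ¬ ∃ U V : Finset (Fin n), Disjoint U V ∧ U.card = m ∧ V.card = m ∧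
      ((∀ u ∈ U, ∀ v ∈ V, G.Adj u v) ∨ (∀ u ∈ U, ∀ v ∈ V, ¬ G.Adj u v))) :
    ¬ ∃ S₁ S₂ S₃ : Finset (Fin n),
      Disjoint S₁ S₂ ∧ Disjoint S₁ S₃ ∧ Disjoint S₂ S₃ ∧
      S₁.card = m ∧ S₂.card = m ∧ S₃.card = m ∧
      ((∀ v₁ ∈ S₁, ∀ v₂ ∈ S₂, ∀ v₃ ∈ S₃, liftEdge G ({v₁, v₂, v₃} : Finset (Fin n))) ∨
       (∀ v₁ ∈ S₁, ∀ v₂ ∈ S₂, ∀ v₃ ∈ S₃, ¬ liftEdge G ({v₁, v₂, v₃} : Finset (Fin n)))) := by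
  rintro ⟨S₁, S₂, S₃, h₁₂, h₁₃, h₂₃, hc₁, hc₂, hc₃, hmono⟩
  have hne : (S₁ ∪ S₂ ∪ S₃).Nonempty :=
    (Finset.card_pos.mp (hc₁ ▸ hm)).mono (Finset.subset_union_left.trans Finset.subset_union_left)
  set w := (S₁ ∪ S₂ ∪ S₃).max' hne
  have below : ∀ S ⊆ S₁ ∪ S₂ ∪ S₃, w ∉ S → ∀ x ∈ S, x < w := fun S hS hw x hx ↦
    Finset.lt_max'_of_mem_erase_max' _ hne
      (Finset.mem_erase.mpr ⟨ne_of_mem_of_not_mem hx hw, hS hx⟩)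
  have hw : w ∈ S₁ ∪ S₂ ∪ S₃ := Finset.max'_mem _ hne
  simp only [Finset.mem_union] at hw
  apply hbip
  rcases hw with (hw₁ | hw₂) | hw₃
  · refine ⟨S₂, S₃, h₂₃, hc₂, hc₃, adj_monochromatic_of_liftEdge_monochromatic G h₂₃
      (below S₂ (by grind) (Finset.disjoint_left.mp h₁₂ hw₁))
      (below S₃ (by grind) (Finset.disjoint_left.mp h₁₃ hw₁)) ?_⟩
    exact hmono.imp (· w hw₁) (· w hw₁)
  · refine ⟨S₁, S₃, h₁₃, hc₁, hc₃, adj_monochromatic_of_liftEdge_monochromatic G h₁₃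
      (below S₁ (by grind) (Finset.disjoint_right.mp h₁₂ hw₂))
      (below S₃ (by grind) (Finset.disjoint_left.mp h₂₃ hw₂)) ?_⟩
    exact hmono.imp (fun h u hu v hv ↦ Finset.insert_comm u w {v} ▸ h u hu w hw₂ v hv)
      (fun h u hu v hv ↦ Finset.insert_comm u w {v} ▸ h u hu w hw₂ v hv)
  · refine ⟨S₁, S₂, h₁₂, hc₁, hc₂, adj_monochromatic_of_liftEdge_monochromatic G h₁₂
      (below S₁ (by grind) (Finset.disjoint_right.mp h₁₃ hw₃))
      (below S₂ (by grind) (Finset.disjoint_right.mp h₂₃ hw₃)) ?_⟩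
    have reorder : ∀ u v, ({u, v, w} : Finset (Fin n)) = insert w {u, v} := fun u v ↦ by
      rw [Finset.pair_comm, Finset.insert_comm]
    exact hmono.imp (fun h u hu v hv ↦ reorder u v ▸ h u hu v hv w hw₃)
      (fun h u hu v hv ↦ reorder u v ▸ h u hu v hv w hw₃)
end

section
/- Let G be any graph on the vertex set {1, 2, …, n} with n ≥ 5, and let 𝒢 be the 3-uniform hypergraph on {1, 2, …, n} whose edges are exactly the triples (i₁, i₂, i₃) with i₁ < i₂ < i₃ such that (i₁, i₂) is an edge of G. Then 𝒢 contains no induced copy of the tight cycle C₅^{(3)}, the 3-uniform hypergraph with vertex set {1, 2, 3, 4, 5} and edge set {123, 234, 345, 451, 512}. -/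
/-- The edge set of the tight cycle `C₅^{(3)}` on vertex set `{0, 1, 2, 3, 4}`. -/
def tightC5 : Finset (Finset (Fin 5)) :=
  {{0, 1, 2}, {1, 2, 3}, {2, 3, 4}, {3, 4, 0}, {4, 0, 1}}

theorem eq_and_eq_of_sorted_triple_eq {α : Type*} [LinearOrder α] {a b c i j k : α}
    (hab : a < b) (hbc : b < c) (hij : i < j) (hjk : j < k)
    (h : ({a, b, c} : Finset α) = {i, j, k}) :
    a = i ∧ b = j := by
  have ha : a = i ∨ a = j ∨ a = k := by simpa [h] using Finset.mem_insert_self a {b, c}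
  have hb : b = i ∨ b = j ∨ b = k := by simpa [h] using (by simp : b ∈ ({a, b, c} : Finset α))
  have hi : i = a ∨ i = b ∨ i = c := by simpa [← h] using Finset.mem_insert_self i {j, k}
  have hj : j = a ∨ j = b ∨ j = c := by simpa [← h] using (by simp : j ∈ ({i, j, k} : Finset α))
  have hai : a = i := by
    apply le_antisymm
    · rcases hi with hi | hi | hi <;> order
    · rcases ha with ha | ha | ha <;> order
  refine ⟨hai, le_antisymm ?_ ?_⟩
  · rcases hj with hj | hj | hj <;> order
  · rcases hb with hb | hb | hb <;> order

theorem liftEdge_iff_adj {n : ℕ} (G : SimpleGraph (Fin n)) {a b c : Fin n}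
    (hab : a < b) (hbc : b < c) :
    liftEdge G {a, b, c} ↔ G.Adj a b := by
  constructor
  · rintro ⟨i, j, k, hij, hjk, he, hadj⟩
    obtain ⟨rfl, rfl⟩ := eq_and_eq_of_sorted_triple_eq hab hbc hij hjk he
    exact hadj
  · exact fun h => ⟨a, b, c, hab, hbc, rfl, h⟩

theorem Function.Injective.exists_two_smallest {ι α : Type*} [Fintype ι] [LinearOrder α]
    {f : ι → α} (hf : f.Injective) (hι : 2 ≤ Fintype.card ι) :
    ∃ x y, f x < f y ∧ ∀ z, z ≠ x → z ≠ y → f y < f z := by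
  classical
  have : Nonempty ι := Fintype.card_pos_iff.mp (by omega)
  obtain ⟨x, -, hx⟩ := Finset.univ.exists_min_image f Finset.univ_nonempty
  have : (Finset.univ.erase x).Nonempty := by
    rw [← Finset.card_pos, Finset.card_erase_of_mem (Finset.mem_univ x), Finset.card_univ]
    omega
  obtain ⟨y, hy, hy_min⟩ := (Finset.univ.erase x).exists_min_image f this
  have hyx : y ≠ x := Finset.ne_of_mem_erase hy
  refine ⟨x, y, (hx y (Finset.mem_univ y)).lt_of_ne (hf.ne hyx.symm), fun z hzx hzy => ?_⟩
  exact (hy_min z (Finset.mem_erase_of_ne_of_mem hzx (Finset.mem_univ z))).lt_of_ne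
    (hf.ne hzy.symm)

theorem tightC5_exists_mem_and_not_mem (x y : Fin 5) (hxy : x ≠ y) :
    ∃ z w : Fin 5, z ≠ x ∧ z ≠ y ∧ w ≠ x ∧ w ≠ y ∧
      ({x, y, z} : Finset (Fin 5)) ∈ tightC5 ∧ ({x, y, w} : Finset (Fin 5)) ∉ tightC5 := by
  revert x y; decide

theorem stmt_9_general (n : ℕ) (G : SimpleGraph (Fin n)) :
    ¬ ∃ f : Fin 5 ↪ Fin n, ∀ x y z : Fin 5, x ≠ y → x ≠ z → y ≠ z →
      (liftEdge G ({f x, f y, f z} : Finset (Fin n)) ↔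
        ({x, y, z} : Finset (Fin 5)) ∈ tightC5) := by
  rintro ⟨f, hf⟩
  obtain ⟨x, y, hxy, hy_lt⟩ := f.injective.exists_two_smallest (by simp)
  have adj_iff_mem : ∀ z, z ≠ x → z ≠ y → (G.Adj (f x) (f y) ↔ {x, y, z} ∈ tightC5) :=
    fun z hzx hzy => (liftEdge_iff_adj G hxy (hy_lt z hzx hzy)).symm.trans
      (hf x y z (ne_of_apply_ne f hxy.ne) (Ne.symm hzx) (Ne.symm hzy))
  obtain ⟨z, w, hzx, hzy, hwx, hwy, hz, hw⟩ :=
    tightC5_exists_mem_and_not_mem x y (ne_of_apply_ne f hxy.ne)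
  exact hw ((adj_iff_mem w hwx hwy).mp ((adj_iff_mem z hzx hzy).mpr hz))

/-- for any graph `G` on `{1, …, n}` with `n ≥ 5`, the 3-uniform hypergraph whose
edges are the triples `i₁ < i₂ < i₃` with `i₁i₂` an edge of `G` contains no induced copy of the
tight cycle `C₅^{(3)}`. -/
theorem stmt_9 (n : ℕ) (hn : 5 ≤ n) (G : SimpleGraph (Fin n)) :
    ¬ ∃ f : Fin 5 ↪ Fin n, ∀ x y z : Fin 5, x ≠ y → x ≠ z → y ≠ z →
      (liftEdge G ({f x, f y, f z} : Finset (Fin n)) ↔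
        ({x, y, z} : Finset (Fin 5)) ∈ tightC5) :=
  stmt_9_general n G
end

section
/- There exists a constant c > 0 such that for every sufficiently large n there is a graph G on n vertices containing no complete bipartite graph and no empty bipartite graph between two disjoint vertex sets each of size ⌈c log n⌉; that is, there are no disjoint vertex sets U, V with |U| = |V| = ⌈c log n⌉ such that every pair (u, v) ∈ U × V is an edge of G, and none such that no pair (u, v) ∈ U × V is an edge of G. -/
/-!
Erdős's counting argument. Colour every pair of vertices red or blue, in one of `2 ^ N` ways.
For fixed disjoint `U`, `V` of size `k`, the `k²` pairs between
them are distinct, so at most `2 · 2 ^ (N - k²)` colourings are constant on them. There are at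
most `n ^ (2k)` such `(U, V)`, hence if `2 n ^ (2k) < 2 ^ (k²)` some colouring has no
monochromatic `U × V`, and its red graph works. With `k ≥ (4 / log 2) log n` we have
`n ^ (2k) ≤ 2 ^ (k² / 2)`, which suffices as soon as `k ≥ 2`.
-/

open Finset

theorem card_filter_forall_eq_mul_pow {α β : Type*} [Fintype α] [DecidableEq α] [Fintype β]
    [DecidableEq β] (S : Finset α) (b : β) :
    #{f : α → β | ∀ a ∈ S, f a = b} * Fintype.card β ^ #S = Fintype.card β ^ Fintype.card α := by
  have hpi : ({f : α → β | ∀ a ∈ S, f a = b} : Finset _) =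
      Fintype.piFinset (fun a => if a ∈ S then {b} else univ) := by
    ext f
    simp only [mem_filter, mem_univ, true_and, Fintype.mem_piFinset]
    refine forall_congr' fun a => ?_
    split_ifs <;> simp [*]
  rw [hpi, Fintype.card_piFinset]
  simp only [apply_ite card, card_singleton, card_univ, prod_ite, prod_const_one, one_mul,
    prod_const, ← pow_add]
  rw [filter_notMem_eq_sdiff, card_univ_sdiff, Nat.sub_add_cancel (card_le_univ S)]

namespace Sym2

theorem card_image_mk_uncurry_product_of_disjoint {α : Type*} [DecidableEq α] {U V : Finset α}
    (h : Disjoint U V) : #(image Sym2.mk.uncurry (U ×ˢ V)) = #U * #V := by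
  rw [card_image_of_injOn, card_product]
  rintro ⟨u, v⟩ huv ⟨u', v'⟩ huv' heq
  simp only [coe_product, Set.mem_prod, mem_coe] at huv huv'
  rcases Sym2.eq_iff.1 heq with ⟨rfl, rfl⟩ | ⟨rfl, -⟩
  · rfl
  · exact absurd huv'.2 (disjoint_left.1 h huv.1)

end Sym2

section

variable {α : Type*} [Fintype α] [DecidableEq α]

theorem exists_coloring_not_monochromatic_between {k : ℕ}
    (hk : 2 * Fintype.card α ^ (2 * k) < 2 ^ (k * k)) :
    ∃ f : Sym2 α → Bool, ∀ U V : Finset α, Disjoint U V → #U = k → #V = k → ∀ b : Bool,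
      ¬ ∀ u ∈ U, ∀ v ∈ V, f s(u, v) = b := by
  set T := {p ∈ powersetCard k (univ : Finset α) ×ˢ powersetCard k (univ : Finset α) |
    Disjoint p.1 p.2} ×ˢ (univ : Finset Bool)
  set bad : (Finset α × Finset α) × Bool → Finset (Sym2 α → Bool) := fun t =>
    {f | ∀ e ∈ image Sym2.mk.uncurry (t.1.1 ×ˢ t.1.2), f e = t.2}
  have hT : #T ≤ 2 * Fintype.card α ^ (2 * k) := by
    calc #T = #{p ∈ powersetCard k (univ : Finset α) ×ˢ powersetCard k univ |
            Disjoint p.1 p.2} * 2 := by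
          rw [card_product, card_univ, Fintype.card_bool]
      _ ≤ #(powersetCard k (univ : Finset α)) ^ 2 * 2 := by
          rw [sq, ← card_product]
          gcongr
          exact filter_subset _ _
      _ ≤ 2 * Fintype.card α ^ (2 * k) := by
          rw [card_powersetCard, card_univ, mul_comm, pow_mul']
          gcongr
          exact Nat.choose_le_pow _ _
  have hbad : ∀ t ∈ T, #(bad t) * 2 ^ (k * k) = 2 ^ Fintype.card (Sym2 α) := by
    rintro ⟨⟨U, V⟩, b⟩ ht
    simp only [T, mem_product, mem_filter, mem_powersetCard] at ht
    obtain ⟨⟨⟨⟨-, hU⟩, -, hV⟩, hUV⟩, -⟩ := ht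
    have := card_filter_forall_eq_mul_pow (image Sym2.mk.uncurry (U ×ˢ V)) b
    rwa [Sym2.card_image_mk_uncurry_product_of_disjoint hUV, hU, hV, Fintype.card_bool] at this
  have hcard : #(T.biUnion bad) < #(univ : Finset (Sym2 α → Bool)) := by
    refine Nat.lt_of_mul_lt_mul_right (a := 2 ^ (k * k)) ?_
    calc #(T.biUnion bad) * 2 ^ (k * k) ≤ (∑ t ∈ T, #(bad t)) * 2 ^ (k * k) := by
          gcongr; exact card_biUnion_le
      _ = #T * 2 ^ Fintype.card (Sym2 α) := by
          rw [sum_mul, sum_congr rfl hbad, sum_const, smul_eq_mul]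
      _ < 2 ^ (k * k) * 2 ^ Fintype.card (Sym2 α) := by
          gcongr; exact hT.trans_lt hk
      _ = #(univ : Finset (Sym2 α → Bool)) * 2 ^ (k * k) := by
          rw [card_univ, Fintype.card_fun, Fintype.card_bool, mul_comm]
  obtain ⟨f, -, hf⟩ := exists_mem_notMem_of_card_lt_card hcard
  refine ⟨f, fun U V hUV hU hV b hmono => hf (mem_biUnion.2 ⟨((U, V), b), ?_, ?_⟩)⟩
  · simp [T, hUV, hU, hV]
  · simp only [bad, mem_filter, mem_univ, true_and, forall_mem_image, mem_product, Prod.forall]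
    exact fun u v huv => hmono u huv.1 v huv.2

theorem SimpleGraph.exists_no_homogeneous_bipartite {k : ℕ}
    (hk : 2 * Fintype.card α ^ (2 * k) < 2 ^ (k * k)) :
    ∃ G : SimpleGraph α, ¬ ∃ U V : Finset α, Disjoint U V ∧ #U = k ∧ #V = k ∧
      ((∀ u ∈ U, ∀ v ∈ V, G.Adj u v) ∨ (∀ u ∈ U, ∀ v ∈ V, ¬ G.Adj u v)) := by
  obtain ⟨f, hf⟩ := exists_coloring_not_monochromatic_between hk
  refine ⟨fromEdgeSet {e | f e = true}, ?_⟩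
  rintro ⟨U, V, hUV, hU, hV, hcomplete | hempty⟩
  · exact hf U V hUV hU hV true fun u hu v hv => ((fromEdgeSet_adj _).1 (hcomplete u hu v hv)).1
  · refine hf U V hUV hU hV false fun u hu v hv => ?_
    have hne : u ≠ v := fun h => Finset.disjoint_left.1 hUV hu (h ▸ hv)
    simpa [fromEdgeSet_adj, hne] using hempty u hu v hv

end

theorem two_mul_pow_lt_two_pow_mul_self {n k : ℕ} (hn : 0 < n) (hk : 2 ≤ k)
    (hkn : 4 * Real.log n ≤ k * Real.log 2) : 2 * n ^ (2 * k) < 2 ^ (k * k) := by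
  have hlog2 : 0 < Real.log 2 := Real.log_pos one_lt_two
  have hk' : (2 : ℝ) ≤ k := by exact_mod_cast hk
  suffices (2 : ℝ) * n ^ (2 * k) < 2 ^ (k * k) by exact_mod_cast this
  rw [← Real.log_lt_log_iff (by positivity) (by positivity), Real.log_mul two_ne_zero
    (by positivity), Real.log_pow, Real.log_pow]
  push_cast
  nlinarith [mul_le_mul_of_nonneg_left hkn (Nat.cast_nonneg k),
    mul_le_mul_of_nonneg_right (mul_le_mul hk' hk' zero_le_two (Nat.cast_nonneg k)) hlog2.le]

/-- there exists `c > 0` such that for every sufficiently large `n` there is a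
graph `G` on `n` vertices containing no complete and no empty bipartite graph between two
disjoint vertex sets each of size `⌈c log n⌉`. -/
theorem stmt_10 :
    ∃ c : ℝ, 0 < c ∧ ∃ N : ℕ, ∀ n : ℕ, N ≤ n →
      ∃ G : SimpleGraph (Fin n),
        ¬ ∃ U V : Finset (Fin n), Disjoint U V ∧
          U.card = ⌈c * Real.log n⌉₊ ∧ V.card = ⌈c * Real.log n⌉₊ ∧
          ((∀ u ∈ U, ∀ v ∈ V, G.Adj u v) ∨ (∀ u ∈ U, ∀ v ∈ V, ¬ G.Adj u v)) := by
  have hlog2 : 0 < Real.log 2 := Real.log_pos one_lt_two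
  refine ⟨4 / Real.log 2, by positivity, 2, fun n hn => ?_⟩
  set k := ⌈4 / Real.log 2 * Real.log n⌉₊
  have hkn : 4 * Real.log n ≤ k * Real.log 2 := by
    have hceil : 4 / Real.log 2 * Real.log n ≤ k := Nat.le_ceil _
    rwa [div_mul_eq_mul_div, div_le_iff₀ hlog2] at hceil
  have hk : 2 ≤ k := by
    have hlogn : Real.log 2 ≤ Real.log n := Real.log_le_log two_pos (by exact_mod_cast hn)
    exact_mod_cast (le_of_mul_le_mul_right (by linarith) hlog2 : (2 : ℝ) ≤ k)
  have hbound : 2 * Fintype.card (Fin n) ^ (2 * k) < 2 ^ (k * k) := by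
    simpa using two_mul_pow_lt_two_pow_mul_self (by omega) hk hkn
  exact SimpleGraph.exists_no_homogeneous_bipartite hbound
end

section
/- For every k ≥ 3 there exist a finite set H with |H| ≥ k + 5 and a 2-colouring χ (red/blue) of the (k+1)-element subsets of H such that for every positive integer n and every 2-colouring c of the k-element subsets of {0, 1, …, n−1}, the step-up colouring C associated with c contains no copy of (H, χ): there is no injection f from H into {0, 1, …, 2ⁿ − 1} such that C({f(x₁), …, f(x_{k+1})}) = χ({x₁, …, x_{k+1}}) for every (k+1)-element subset {x₁, …, x_{k+1}} of H. -/
/-!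
Two facts are played against each other.

For `a < b < c` one has `δ(a, c) = max (δ(a, b), δ(b, c))`, and consecutive deltas differ. Take
`A < B < m₁ < ⋯ < m_r < X < Y` with `r ≥ 1`: deleting `A` or `B` changes only the first delta,
deleting `X` or `Y` only the last one, and a short case analysis on the deltas shows that if
deleting `A` and deleting `B` give different step-up colours, then deleting `X` and deleting `Y`
give the same colour.

Now let `H = 𝔽₂^(k+3)` and colour a `(k+1)`-set by the parity of `∑ ⟨u, v⟩` over its pairs. For
`a, b ∈ W` the colours of `W \ {a}` and `W \ {b}` differ iff `∑_{t ∈ W \ {a, b}} ⟨a + b, t⟩ = 1`,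
a linear condition on the other points. Given an embedding of `H` into `ℕ`, let `v₁, v₂` be the two
lowest and `v₃, v₄` the two highest points. The fibres of `t ↦ (⟨v₁ + v₂, t⟩, ⟨v₃ + v₄, t⟩)` over
its range have at least `2^(k+1)` points each, so one can add `k - 2` points `M` making both sums
over `{v₃, v₄} ∪ M` and over `{v₁, v₂} ∪ M` odd; `W = {v₁, …, v₄} ∪ M` then contradicts the
first fact.
-/

/-- `stepDelta a b` is the largest index `i` such that the `i`-th binary digits of `a` and `b`
differ; equivalently `⌊log₂ (a XOR b)⌋`. -/
def stepDelta (a b : ℕ) : ℕ := Nat.log 2 (a ^^^ b)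

/-- The list of deltas of consecutive elements of a list. -/
def deltaList : List ℕ → List ℕ
  | a :: b :: rest => stepDelta a b :: deltaList (b :: rest)
  | _ => []

/-- Given a non-monotone list, decide whether its first local extremum is a local maximum
(`true`) or a local minimum (`false`). -/
def firstExtremumIsMax : List ℕ → Bool
  | a :: b :: c :: rest =>
      if a < b ∧ c < b then true
      else if b < a ∧ b < c then false
      else firstExtremumIsMax (b :: c :: rest)
  | _ => false

/-- The step-up colouring: given a 2-colouring `c` (red = `false`, blue = `true`) of the
`k`-element subsets of `{0, …, n-1}`, the `(k+1)`-element subset `S = {ε₁ < … < ε_{k+1}}` of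
`{0, …, 2ⁿ - 1}` is coloured as follows.  Let `δᵢ = stepDelta εᵢ ε_{i+1}`.  If `δ₁, …, δ_k` is
monotone, `S` gets the colour `c {δ₁, …, δ_k}`; otherwise `S` is coloured blue if the first
local extremum of `δ₁, …, δ_k` is a local maximum, and red if it is a local minimum. -/
def stepUpColour (c : Finset ℕ → Bool) (S : Finset ℕ) : Bool :=
  let d := deltaList (S.sort (· ≤ ·))
  if List.IsChain (· < ·) d ∨ List.IsChain (· > ·) d then c d.toFinset
  else firstExtremumIsMax d

open Finset

theorem testBit_log_two_self {x : ℕ} (hx : x ≠ 0) : x.testBit (Nat.log 2 x) = true := by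
  rw [← Nat.log2_eq_log_two]
  exact Nat.testBit_log2 hx

theorem lt_two_pow_succ_log_two (x : ℕ) : x < 2 ^ (Nat.log 2 x + 1) :=
  Nat.lt_pow_succ_log_self Nat.one_lt_two x

theorem testBit_stepDelta {a b : ℕ} (hab : a < b) :
    a.testBit (stepDelta a b) = false ∧ b.testBit (stepDelta a b) = true := by
  have hdiff : (a.testBit (stepDelta a b)).xor (b.testBit (stepDelta a b)) = true := by
    rw [← Nat.testBit_xor]
    exact testBit_log_two_self (Nat.xor_eq_zero_iff.not.2 hab.ne)
  have hagree : ∀ j > stepDelta a b, b.testBit j = a.testBit j := by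
    intro j hj
    have : (a ^^^ b).testBit j = false :=
      Nat.testBit_lt_two_pow ((lt_two_pow_succ_log_two _).trans_le
        (Nat.pow_le_pow_right two_pos hj))
    rw [Nat.testBit_xor] at this
    revert this; cases a.testBit j <;> cases b.testBit j <;> simp
  cases ha : a.testBit (stepDelta a b) <;> cases hb : b.testBit (stepDelta a b) <;>
    simp only [ha, hb] at hdiff <;> try trivial
  exact absurd (Nat.lt_of_testBit _ hb ha hagree) hab.not_gt

theorem stepDelta_ne {a b c : ℕ} (hab : a < b) (hbc : b < c) :
    stepDelta a b ≠ stepDelta b c := fun h => by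
  simpa [h, (testBit_stepDelta hbc).1] using (testBit_stepDelta hab).2

theorem log_two_xor_of_log_two_lt {x y : ℕ} (h : Nat.log 2 x < Nat.log 2 y) :
    Nat.log 2 (x ^^^ y) = Nat.log 2 y := by
  have hy : y ≠ 0 := by rintro rfl; simp at h
  apply Nat.log_eq_of_pow_le_of_lt_pow
  · apply Nat.ge_two_pow_of_testBit
    rw [Nat.testBit_xor, testBit_log_two_self hy,
      Nat.testBit_lt_two_pow
        ((lt_two_pow_succ_log_two x).trans_le (Nat.pow_le_pow_right two_pos h))]
    rfl
  · exact Nat.xor_lt_two_pow ((lt_two_pow_succ_log_two x).trans_le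
      (Nat.pow_le_pow_right two_pos (by omega))) (lt_two_pow_succ_log_two y)

theorem stepDelta_eq_max {a b c : ℕ} (hab : a < b) (hbc : b < c) :
    stepDelta a c = max (stepDelta a b) (stepDelta b c) := by
  have hxor : a ^^^ c = (a ^^^ b) ^^^ (b ^^^ c) := by
    rw [Nat.xor_assoc, ← Nat.xor_assoc b, Nat.xor_self, Nat.zero_xor]
  rcases (stepDelta_ne hab hbc).lt_or_gt with h | h
  · rw [max_eq_right h.le, stepDelta, hxor]
    exact log_two_xor_of_log_two_lt h
  · rw [max_eq_left h.le, stepDelta, hxor, Nat.xor_comm]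
    exact log_two_xor_of_log_two_lt h

section DeltaList

open List

theorem deltaList_append_of_ne_nil :
    ∀ {l : List ℕ} (hl : l ≠ []) (r : List ℕ),
      deltaList (l ++ r) = deltaList l ++ deltaList (l.getLast hl :: r)
  | [_], _, r => by cases r <;> rfl
  | a :: b :: l, _, r => by
    have ih := deltaList_append_of_ne_nil (cons_ne_nil b l) r
    rw [getLast_cons_cons]
    exact congrArg (stepDelta a b :: ·) ih

theorem isChain_ne_deltaList : ∀ {l : List ℕ}, l.IsChain (· < ·) → (deltaList l).IsChain (· ≠ ·)
  | [], _ | [_], _ | [_, _], _ => by simp [deltaList]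
  | _ :: _ :: _ :: _, h => by
    rw [isChain_cons_cons] at h
    exact isChain_cons_cons.2 ⟨stepDelta_ne h.1 (isChain_cons_cons.1 h.2).1,
      isChain_ne_deltaList h.2⟩

def deltaColour (c : Finset ℕ → Bool) (d : List ℕ) : Bool :=
  if d.IsChain (· < ·) ∨ d.IsChain (· > ·) then c d.toFinset else firstExtremumIsMax d

theorem stepUpColour_eq_deltaColour (c : Finset ℕ → Bool) (S : Finset ℕ) :
    stepUpColour c S = deltaColour c (deltaList (S.sort (· ≤ ·))) := rfl

theorem firstExtremumIsMax_eq_false :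
    ∀ {x : ℕ} {t : List ℕ}, (∀ y ∈ t.head?, y < x) → (x :: t).IsChain (· ≠ ·) →
      ¬ (x :: t).IsChain (· > ·) → firstExtremumIsMax (x :: t) = false
  | _, [], _, _, hdec | _, [_], _, _, hdec => absurd (by simp_all) hdec
  | x, y :: z :: t, hx, hne, hdec => by
    have hyx : y < x := hx y rfl
    simp only [isChain_cons_cons] at hne hdec
    rw [firstExtremumIsMax, if_neg (by omega)]
    rcases hne.2.1.lt_or_gt with hyz | hzy
    · rw [if_pos ⟨hyx, hyz⟩]
    · rw [if_neg (by omega)]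
      exact firstExtremumIsMax_eq_false (by simpa using hzy) (isChain_cons_cons.2 hne.2)
        (by rw [isChain_cons_cons]; tauto)

theorem deltaColour_eq_false (c : Finset ℕ → Bool) {x : ℕ} {t : List ℕ}
    (hx : ∀ y ∈ t.head?, y < x) (hne : (x :: t).IsChain (· ≠ ·))
    (hdec : ¬ (x :: t).IsChain (· > ·)) : deltaColour c (x :: t) = false := by
  have hinc : ¬ (x :: t).IsChain (· < ·) := fun h => by
    obtain _ | ⟨y, t⟩ := t
    · exact hdec (by simp)
    · exact (lt_asymm (hx y rfl)) (isChain_cons_cons.1 h).1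
  rw [deltaColour, if_neg (by tauto)]
  exact firstExtremumIsMax_eq_false hx hne hdec

end DeltaList

theorem not_isChain_gt_append_of_lt {l : List ℕ} {u w : ℕ} (h : u < w) :
    ¬ (l ++ [u, w]).IsChain (· > ·) := fun hc => by
  have := hc.infix (List.suffix_append l [u, w]).isInfix
  simp only [List.isChain_cons_cons] at this
  omega

theorem List.IsChain.gt_append_singleton_of_lt {l : List ℕ} {u w : ℕ}
    (hc : (l ++ [w]).IsChain (· > ·)) (h : u < w) : (l ++ [u]).IsChain (· > ·) := by
  rw [List.isChain_append] at hc ⊢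
  refine ⟨hc.1, by simp, fun x hx y hy => ?_⟩
  obtain rfl : y = u := by simpa [eq_comm] using hy
  exact h.trans (hc.2.2 x hx w rfl)

/-- The four lists are the deltas after deleting the lowest, the second lowest, the second highest
and the highest point. If `u > w` the last two coincide and if `a₀ < b₀` the first two do.
Otherwise, according as `b₀ :: D ++ [u]` is decreasing or not, the first two or the last two begin
with a descent that is broken later, so both are red. -/
theorem deltaColour_top_eq_of_bot_ne (c : Finset ℕ → Bool) {a₀ b₀ u w : ℕ} {D : List ℕ}
    (hab : a₀ ≠ b₀) (huw : u ≠ w)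
    (neA : (b₀ :: (D ++ [u, w])).IsChain (· ≠ ·))
    (neB : (max a₀ b₀ :: (D ++ [u, w])).IsChain (· ≠ ·))
    (neX : (a₀ :: b₀ :: (D ++ [max u w])).IsChain (· ≠ ·))
    (neY : (a₀ :: b₀ :: (D ++ [u])).IsChain (· ≠ ·))
    (h : deltaColour c (b₀ :: (D ++ [u, w])) ≠ deltaColour c (max a₀ b₀ :: (D ++ [u, w]))) :
    deltaColour c (a₀ :: b₀ :: (D ++ [max u w])) = deltaColour c (a₀ :: b₀ :: (D ++ [u])) := by
  rcases huw.lt_or_gt with huw | hwu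
  swap
  · rw [max_eq_left hwu.le]
  rw [max_eq_right huw.le] at neX ⊢
  rcases hab.lt_or_gt with hab | hba
  · rw [max_eq_right hab.le] at h
    exact absurd rfl h
  rw [max_eq_left hba.le] at h neB
  have hba' (t : List ℕ) : ∀ y ∈ (b₀ :: t).head?, y < a₀ := by simpa using hba
  by_cases hdec : (b₀ :: (D ++ [u])).IsChain (· > ·)
  · have hhead : ∀ y ∈ (D ++ [u, w]).head?, y < b₀ := by
      simpa [List.head?_append] using (List.isChain_cons.1 hdec).1
    refine absurd ?_ h
    rw [deltaColour_eq_false c hhead neA (not_isChain_gt_append_of_lt (l := b₀ :: D) huw),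
      deltaColour_eq_false c (fun y hy => (hhead y hy).trans hba) neB
        (not_isChain_gt_append_of_lt (l := a₀ :: D) huw)]
  · have hdecw : ¬ (b₀ :: (D ++ [w])).IsChain (· > ·) := fun hc =>
      hdec (List.IsChain.gt_append_singleton_of_lt (l := b₀ :: D) hc huw)
    rw [deltaColour_eq_false c (hba' _) neX (fun hc => hdecw hc.tail),
      deltaColour_eq_false c (hba' _) neY (fun hc => hdec hc.tail)]

theorem deltaColour_deltaList_top_eq_of_bot_ne (c : Finset ℕ → Bool) {A B X Y : ℕ}
    {ms : List ℕ} (hms : ms ≠ []) (hch : (A :: B :: (ms ++ [X, Y])).IsChain (· < ·))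
    (h : deltaColour c (deltaList (B :: (ms ++ [X, Y]))) ≠
      deltaColour c (deltaList (A :: (ms ++ [X, Y])))) :
    deltaColour c (deltaList (A :: B :: (ms ++ [Y]))) =
      deltaColour c (deltaList (A :: B :: (ms ++ [X]))) := by
  obtain ⟨m, ms', rfl⟩ := List.exists_cons_of_ne_nil hms
  set m' := (m :: ms').getLast hms
  have hAB : A < B := (List.isChain_cons_cons.1 hch).1
  have hBm : B < m := by simp_all
  have hm'X : m' < X := (List.isChain_append.1 hch.tail.tail).2.2 _
    (by simp [m', List.getLast?_eq_some_getLast hms]) _ rfl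
  have hXY : X < Y := by simp_all
  have hne : ∀ l, l.Sublist (A :: B :: (m :: ms' ++ [X, Y])) →
      (deltaList l).IsChain (· ≠ ·) :=
    fun l hl => isChain_ne_deltaList (hch.sublist hl)
  have hA : deltaList (B :: (m :: ms' ++ [X, Y])) =
      stepDelta B m :: (deltaList (m :: ms') ++ [stepDelta m' X, stepDelta X Y]) := by
    show _ :: deltaList (m :: ms' ++ [X, Y]) = _
    rw [deltaList_append_of_ne_nil hms]; rfl
  have hB : deltaList (A :: (m :: ms' ++ [X, Y])) = max (stepDelta A B) (stepDelta B m) ::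
      (deltaList (m :: ms') ++ [stepDelta m' X, stepDelta X Y]) := by
    show stepDelta A m :: deltaList (m :: ms' ++ [X, Y]) = _
    rw [deltaList_append_of_ne_nil hms, stepDelta_eq_max hAB hBm]; rfl
  have hX : deltaList (A :: B :: (m :: ms' ++ [Y])) = stepDelta A B :: stepDelta B m ::
      (deltaList (m :: ms') ++ [max (stepDelta m' X) (stepDelta X Y)]) := by
    show _ :: _ :: deltaList (m :: ms' ++ [Y]) = _
    rw [deltaList_append_of_ne_nil hms, ← stepDelta_eq_max hm'X hXY]; rfl
  have hY : deltaList (A :: B :: (m :: ms' ++ [X])) =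
      stepDelta A B :: stepDelta B m :: (deltaList (m :: ms') ++ [stepDelta m' X]) := by
    show _ :: _ :: deltaList (m :: ms' ++ [X]) = _
    rw [deltaList_append_of_ne_nil hms]; rfl
  rw [hA, hB] at h
  rw [hX, hY]
  exact deltaColour_top_eq_of_bot_ne c (stepDelta_ne hAB hBm) (stepDelta_ne hm'X hXY)
    (hA ▸ hne _ (List.sublist_cons_self A _)) (hB ▸ hne _ (by simp)) (hX ▸ hne _ (by simp))
    (hY ▸ hne _ (by simp)) h

theorem Finset.sort_erase {α : Type*} [LinearOrder α] (s : Finset α) (a : α) :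
    (s.erase a).sort (· ≤ ·) = (s.sort (· ≤ ·)).erase a := by
  have hnd := (s.sort_nodup (· ≤ ·)).erase a
  conv_rhs =>
    rw [← (List.toFinset_sort _ hnd).2 ((s.pairwise_sort _).sublist (List.erase_sublist ..))]
  congr 1
  ext x
  simp [(s.sort_nodup (· ≤ ·)).mem_erase_iff]

theorem stepUpColour_erase_eq_of_erase_ne (c : Finset ℕ → Bool) {S : Finset ℕ} {a b x y : ℕ}
    (hS : {a, b, x, y} ⊆ S) (hcard : 5 ≤ #S) (hab : a < b) (hxy : x < y)
    (hmid : ∀ t ∈ S \ {a, b, x, y}, b < t ∧ t < x)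
    (h : stepUpColour c (S.erase a) ≠ stepUpColour c (S.erase b)) :
    stepUpColour c (S.erase x) = stepUpColour c (S.erase y) := by
  set ms := (S \ {a, b, x, y}).sort (· ≤ ·)
  have hms : ∀ t ∈ ms, b < t ∧ t < x := fun t ht => hmid t ((mem_sort _).1 ht)
  obtain ⟨t, ht⟩ : ∃ t, t ∈ ms := List.exists_mem_of_length_pos <| by
    rw [length_sort, card_sdiff_of_subset hS]
    have := card_le_four (a := a) (b := b) (c := x) (d := y)
    omega
  have hbx := (hms t ht).1.trans (hms t ht).2
  have hpw : (a :: b :: (ms ++ [x, y])).Pairwise (· < ·) := by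
    have hmono : ms.Pairwise (· < ·) := sortedLT_sort _ |>.pairwise
    simp only [List.pairwise_cons, List.pairwise_append, List.mem_append, List.mem_cons,
      List.not_mem_nil, or_false, hmono]
    grind
  have hsort : S.sort (· ≤ ·) = a :: b :: (ms ++ [x, y]) := by
    convert (List.toFinset_sort _ hpw.nodup).2 (hpw.imp le_of_lt) using 2
    simp only [insert_subset_iff, singleton_subset_iff] at hS
    ext t; simp [ms]; grind
  simp only [stepUpColour_eq_deltaColour, Finset.sort_erase, hsort] at h ⊢
  have hxms : x ∉ ms := fun hx => (hms x hx).2.false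
  have hyms : y ∉ ms := fun hy => ((hms y hy).2.trans hxy).false
  have hax := hab.trans hbx
  simp only [List.erase_cons, List.erase_append_right _ hxms, List.erase_append_right _ hyms,
    beq_iff_eq, hab.ne, hax.ne, (hax.trans hxy).ne, hbx.ne, (hbx.trans hxy).ne, hxy.ne, if_false,
    if_true] at h ⊢
  exact deltaColour_deltaList_top_eq_of_bot_ne c (List.ne_nil_of_mem ht)
    (List.isChain_iff_pairwise.2 hpw) h

section PairSum

variable {α R : Type*} [LinearOrder α]

def pairSum [AddCommMonoid R] (B : α → α → R) (S : Finset α) : R :=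
  ∑ u ∈ S, ∑ v ∈ S with v < u, B u v

theorem pairSum_insert [AddCommMonoid R] {B : α → α → R} (hB : ∀ u v, B u v = B v u)
    {a : α} {S : Finset α} (ha : a ∉ S) :
    pairSum B (insert a S) = pairSum B S + ∑ t ∈ S, B a t := by
  have hsplit : ∑ t ∈ S with t < a, B a t + ∑ t ∈ S, (if a < t then B t a else 0) =
      ∑ t ∈ S, B a t := by
    rw [sum_filter, ← sum_add_distrib]
    refine sum_congr rfl fun t ht => ?_
    rcases (ne_of_mem_of_not_mem ht ha).lt_or_gt with h | h
    · simp [h, h.not_gt]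
    · simp [h, h.not_gt, hB]
  simp only [pairSum, sum_insert ha, filter_insert, lt_irrefl, if_false]
  rw [← hsplit]
  have hinner : ∀ u ∈ S, ∑ v ∈ (if a < u then insert a {v ∈ S | v < u} else {v ∈ S | v < u}),
      B u v = (if a < u then B u a else 0) + ∑ v ∈ S with v < u, B u v := fun u _ => by
    split_ifs
    · rw [sum_insert (by simp [ha])]
    · rw [zero_add]
  rw [sum_congr rfl hinner, sum_add_distrib]
  abel

theorem pairSum_erase_add_pairSum_erase [CommRing R] [CharP R 2]
    {B : α → α → R} (hB : ∀ u v, B u v = B v u) {W : Finset α} {a b : α} (ha : a ∈ W)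
    (hb : b ∈ W) (hab : a ≠ b) :
    pairSum B (W.erase a) + pairSum B (W.erase b) = ∑ t ∈ (W.erase a).erase b, (B a t + B b t) := by
  set U := (W.erase a).erase b
  have hWa : W.erase a = insert b U := (insert_erase (mem_erase.2 ⟨hab.symm, hb⟩)).symm
  have hWb : W.erase b = insert a U := by
    rw [show U = (W.erase b).erase a from erase_right_comm, insert_erase (mem_erase.2 ⟨hab, ha⟩)]
  rw [hWa, hWb, pairSum_insert hB (notMem_erase b _),
    pairSum_insert hB (fun h => notMem_erase a W (mem_of_mem_erase h)), sum_add_distrib]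
  linear_combination CharTwo.add_self_eq_zero (pairSum B U)

end PairSum

section Parity

variable {α ι : Type*} [LinearOrder α] [Fintype ι]

def parityColouring (e : α → ι → ZMod 2) (S : Finset α) : Bool :=
  decide (pairSum (fun u v => e u ⬝ᵥ e v) S = 1)

theorem parityColouring_erase_ne {e : α → ι → ZMod 2} {W : Finset α} {a b : α} (ha : a ∈ W)
    (hb : b ∈ W) (hab : a ≠ b) (h : ∑ t ∈ (W.erase a).erase b, (e a + e b) ⬝ᵥ e t = 1) :
    parityColouring e (W.erase a) ≠ parityColouring e (W.erase b) := by
  have hsum := pairSum_erase_add_pairSum_erase (fun u v => dotProduct_comm (e u) (e v)) ha hb hab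
  simp only [← add_dotProduct, h] at hsum
  unfold parityColouring
  generalize pairSum (fun u v => e u ⬝ᵥ e v) (W.erase a) = x,
    pairSum (fun u v => e u ⬝ᵥ e v) (W.erase b) = y at hsum ⊢
  revert x y
  decide

theorem exists_dotProduct_eq_one [DecidableEq ι] {γ : ι → ZMod 2} (hγ : γ ≠ 0) :
    ∃ t, γ ⬝ᵥ t = 1 := by
  obtain ⟨i, hi⟩ := Function.ne_iff.1 hγ
  rw [Pi.zero_apply] at hi
  refine ⟨Pi.single i 1, ?_⟩
  rw [dotProduct_single, mul_one]
  revert hi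
  generalize γ i = z
  revert z
  decide

end Parity

theorem exists_eq_one_and_eq_one {G : Type*} [AddZeroClass G] (f g : G →+ ZMod 2)
    (hf : ∃ x, f x = 1) (hg : ∃ y, g y = 1) : ∃ z, f z = 1 ∧ g z = 1 := by
  obtain ⟨x, hx⟩ := hf
  obtain ⟨y, hy⟩ := hg
  by_cases hgx : g x = 1
  · exact ⟨x, hx, hgx⟩
  by_cases hfy : f y = 1
  · exact ⟨y, hfy, hy⟩
  have h0 : ∀ z : ZMod 2, z ≠ 1 → z = 0 := by decide
  exact ⟨x + y, by simp [hx, h0 _ hfy], by simp [hy, h0 _ hgx]⟩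

theorem card_le_card_mul_card_fiber {G A : Type*} [AddGroup G] [Fintype G] [AddMonoid A]
    [Fintype A] [DecidableEq A] (φ : G →+ A) {a : A} (ha : a ∈ Set.range φ) :
    Fintype.card G ≤ Fintype.card A * #{t | φ t = a} :=
  calc Fintype.card G = ∑ b, #{t | φ t = b} := card_eq_sum_card_fiberwise fun _ _ => mem_univ _
    _ ≤ ∑ _b : A, #{t | φ t = a} := sum_le_sum fun b _ => by
      by_cases hb : b ∈ Set.range φ
      · rw [AddMonoidHom.card_fiber_eq_of_mem_range φ hb ha]
      · rw [filter_false_of_mem fun t _ h => hb ⟨t, h⟩, card_empty]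
        exact Nat.zero_le _
    _ = Fintype.card A * #{t | φ t = a} := by simp

theorem exists_disjoint_card_eq_sum_eq {H A : Type*} [Fintype H] [DecidableEq H]
    [AddCommMonoid A] [DecidableEq A] (g : H → A) {a : A} {s : Finset H} {m : ℕ}
    (h0 : #s + m < #{t | g t = 0}) (ha : #s + m < #{t | g t = a}) :
    ∃ M : Finset H, Disjoint M s ∧ #M = m + 1 ∧ ∑ t ∈ M, g t = a := by
  obtain ⟨M₀, hM₀, hM₀card⟩ := exists_subset_card_eq (s := ({t | g t = 0} : Finset H) \ s) (n := m)
    (by have := le_card_sdiff s {t | g t = 0}; omega)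
  obtain ⟨x, hx⟩ : (({t | g t = a} : Finset H) \ (s ∪ M₀)).Nonempty := by
    rw [← card_pos]
    have := le_card_sdiff (s ∪ M₀) {t | g t = a}
    have := card_union_le s M₀
    omega
  simp only [mem_sdiff, mem_filter, mem_univ, true_and, mem_union, not_or] at hx
  have hM₀s : ∀ t ∈ M₀, g t = 0 ∧ t ∉ s := fun t ht => by simpa using hM₀ ht
  refine ⟨insert x M₀, disjoint_insert_left.2 ⟨hx.2.1, disjoint_left.2 fun t ht => (hM₀s t ht).2⟩,
    by rw [card_insert_of_notMem hx.2.2, hM₀card], ?_⟩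
  rw [sum_insert hx.2.2, sum_eq_zero fun t ht => (hM₀s t ht).1, add_zero, hx.1]

theorem exists_two_min_two_max {H β : Type*} [Fintype H] [DecidableEq H] [LinearOrder β]
    {f : H → β} (hf : Function.Injective f) (hH : 4 ≤ Fintype.card H) :
    ∃ v₁ v₂ v₃ v₄, f v₁ < f v₂ ∧ f v₂ < f v₃ ∧ f v₃ < f v₄ ∧
      ∀ t ∉ ({v₁, v₂, v₃, v₄} : Finset H), f v₂ < f t ∧ f t < f v₃ := by
  set N := Fintype.card H
  have hcard : #(univ.image f) = N := card_image_of_injective _ hf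
  set g := (univ.image f).orderEmbOfFin hcard
  choose v hv using fun i => mem_image.1 ((univ.image f).orderEmbOfFin_mem hcard i)
  have hfv : ∀ i, f (v i) = g i := fun i => (hv i).2
  have hlt : ∀ i j : Fin N, i.1 < j.1 → f (v i) < f (v j) := fun i j h => by
    rw [hfv, hfv]; exact g.strictMono h
  refine ⟨v ⟨0, by omega⟩, v ⟨1, by omega⟩, v ⟨N - 2, by omega⟩, v ⟨N - 1, by omega⟩,
    hlt _ _ (by simp), hlt _ _ (by simp; omega), hlt _ _ (by simp; omega), fun t ht => ?_⟩
  obtain ⟨j, hj⟩ : f t ∈ Set.range g := by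
    rw [range_orderEmbOfFin]; simp
  have hj' : ∀ i, j = i → t = v i := fun i h => hf (by rw [hfv, ← hj, h])
  simp only [mem_insert, mem_singleton, not_or] at ht
  have h₁ : j.1 ≠ 0 := fun h => ht.1 (hj' _ (Fin.ext h))
  have h₂ : j.1 ≠ 1 := fun h => ht.2.1 (hj' _ (Fin.ext h))
  have h₃ : j.1 ≠ N - 2 := fun h => ht.2.2.1 (hj' _ (Fin.ext h))
  have h₄ : j.1 ≠ N - 1 := fun h => ht.2.2.2 (hj' _ (Fin.ext h))
  rw [← hj, ← hfv j]
  exact ⟨hlt _ _ (by simp; omega), hlt _ _ (by simp; omega)⟩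

theorem parityColouring_erase_ne_of_sum_eq {α ι : Type*} [LinearOrder α] [Fintype ι]
    {e : α → ι → ZMod 2} {a b c d : α} {M : Finset α}
    (hv : [a, b, c, d].Nodup) (hM : Disjoint M {a, b, c, d})
    (h : ∑ t ∈ M, (e a + e b) ⬝ᵥ e t = 1 + (e a + e b) ⬝ᵥ (e c + e d)) :
    parityColouring e ((insert a (insert b (insert c (insert d M)))).erase a) ≠
      parityColouring e ((insert a (insert b (insert c (insert d M)))).erase b) := by
  simp only [List.nodup_cons, List.mem_cons, List.not_mem_nil, or_false, not_or] at hv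
  simp only [disjoint_insert_right, disjoint_singleton_right] at hM
  refine parityColouring_erase_ne (by simp) (by simp) hv.1.1 ?_
  have hU : ((insert a (insert b (insert c (insert d M)))).erase a).erase b =
      insert c (insert d M) := by
    ext t; simp only [mem_erase, mem_insert]; grind
  rw [hU, sum_insert (by simp [hv.2.2.1, hM.2.2.1]), sum_insert hM.2.2.2, h, dotProduct_add]
  generalize (e a + e b) ⬝ᵥ e c = x, (e a + e b) ⬝ᵥ e d = y
  revert x y
  decide

theorem exists_disjoint_sum_dotProduct_eq {α ι : Type*} [Fintype α] [DecidableEq α] [Fintype ι]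
    [DecidableEq ι] (e : α ≃ (ι → ZMod 2)) {γ₁ γ₂ : ι → ZMod 2} (h₁ : γ₁ ≠ 0) (h₂ : γ₂ ≠ 0)
    (ρ : ZMod 2) {s : Finset α} {m : ℕ} (hm : 4 * (#s + m + 1) ≤ Fintype.card α) :
    ∃ M : Finset α, Disjoint M s ∧ #M = m + 1 ∧
      ∑ t ∈ M, γ₁ ⬝ᵥ e t = ρ ∧ ∑ t ∈ M, γ₂ ⬝ᵥ e t = ρ := by
  let φ : (ι → ZMod 2) →+ ZMod 2 × ZMod 2 :=
    (AddMonoidHom.mk' (γ₁ ⬝ᵥ ·) (dotProduct_add γ₁)).prod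
      (AddMonoidHom.mk' (γ₂ ⬝ᵥ ·) (dotProduct_add γ₂))
  have hfib : ∀ b ∈ Set.range φ, #s + m < #{t | φ (e t) = b} := fun b hb => by
    have hcard := card_le_card_mul_card_fiber φ hb
    rw [← card_equiv e (s := {t | φ (e t) = b}) (fun t => by simp)] at hcard
    simp only [Fintype.card_prod, ZMod.card, ← Fintype.card_congr e] at hcard
    omega
  obtain ⟨z, hz₁, hz₂⟩ := exists_eq_one_and_eq_one
    (AddMonoidHom.fst _ _ |>.comp φ) (AddMonoidHom.snd _ _ |>.comp φ)
    (exists_dotProduct_eq_one h₁) (exists_dotProduct_eq_one h₂)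
  have hρ : (ρ, ρ) ∈ Set.range φ := by
    rcases (show ∀ x : ZMod 2, x = 0 ∨ x = 1 by decide) ρ with rfl | rfl
    · exact ⟨0, map_zero φ⟩
    · exact ⟨z, Prod.ext hz₁ hz₂⟩
  obtain ⟨M, hMs, hM, hsum⟩ :=
    exists_disjoint_card_eq_sum_eq (fun t => φ (e t)) (hfib 0 ⟨0, map_zero φ⟩) (hfib _ hρ)
  refine ⟨M, hMs, hM, ?_, ?_⟩
  · simpa [φ, Prod.fst_sum] using congrArg Prod.fst hsum
  · simpa [φ, Prod.snd_sum] using congrArg Prod.snd hsum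

theorem exists_parityColouring_erase_ne {α ι : Type*} [LinearOrder α] [Fintype α] [Fintype ι]
    [DecidableEq ι] (e : α ≃ (ι → ZMod 2)) {m : ℕ} (hm : 4 * (m + 5) ≤ Fintype.card α)
    {v₁ v₂ v₃ v₄ : α} (hv : [v₁, v₂, v₃, v₄].Nodup) :
    ∃ W : Finset α, {v₁, v₂, v₃, v₄} ⊆ W ∧ #W = m + 5 ∧
      parityColouring e (W.erase v₁) ≠ parityColouring e (W.erase v₂) ∧
      parityColouring e (W.erase v₃) ≠ parityColouring e (W.erase v₄) := by
  have hne : ∀ {u v}, u ≠ v → e u + e v ≠ 0 := fun {u v} huv h => huv <| e.injective <| by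
    rw [← sub_eq_zero, ← h]; exact funext fun i => CharTwo.sub_eq_add (e u i) (e v i)
  have hv' := hv
  simp only [List.nodup_cons, List.mem_cons, List.not_mem_nil, or_false, not_or,
    List.nodup_nil, not_false_eq_true, and_true] at hv'
  obtain ⟨M, hMs, hM, hsum₁, hsum₂⟩ := exists_disjoint_sum_dotProduct_eq e (hne hv'.1.1)
    (hne hv'.2.2) (1 + (e v₁ + e v₂) ⬝ᵥ (e v₃ + e v₄)) (s := {v₁, v₂, v₃, v₄}) (m := m)
    (by have := card_le_four (a := v₁) (b := v₂) (c := v₃) (d := v₄); omega)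
  rw [dotProduct_comm (e v₁ + e v₂)] at hsum₂
  have hMs' : Disjoint M {v₃, v₄, v₁, v₂} := by convert hMs using 1; ext; simp; tauto
  have hv'' : [v₃, v₄, v₁, v₂].Nodup := by simp; tauto
  refine ⟨insert v₁ (insert v₂ (insert v₃ (insert v₄ M))), ?_, ?_,
    parityColouring_erase_ne_of_sum_eq hv hMs hsum₁, ?_⟩
  · intro t; simp only [mem_insert, mem_singleton]; tauto
  · simp only [disjoint_insert_right, disjoint_singleton_right] at hMs
    rw [card_insert_of_notMem (by simp [hv'.1.1, hv'.1.2.1, hv'.1.2.2, hMs.1]),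
      card_insert_of_notMem (by simp [hv'.2.1.1, hv'.2.1.2, hMs.2.1]),
      card_insert_of_notMem (by simp [hv'.2.2, hMs.2.2.1]), card_insert_of_notMem hMs.2.2.2, hM]
  · rw [show insert v₁ (insert v₂ (insert v₃ (insert v₄ M))) =
      insert v₃ (insert v₄ (insert v₁ (insert v₂ M))) by ext; simp; tauto]
    exact parityColouring_erase_ne_of_sum_eq hv'' hMs' hsum₂

theorem not_forall_stepUpColour_map_eq_parityColouring (c : Finset ℕ → Bool) {α ι : Type*}
    [LinearOrder α] [Fintype α] [Fintype ι] [DecidableEq ι] (e : α ≃ (ι → ZMod 2)) {m : ℕ}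
    (hm : 4 * (m + 5) ≤ Fintype.card α) (f : α ↪ ℕ) :
    ¬ ∀ S : Finset α, #S = m + 4 → stepUpColour c (S.map f) = parityColouring e S := by
  intro hf
  obtain ⟨v₁, v₂, v₃, v₄, h₁₂, h₂₃, h₃₄, hmid⟩ := exists_two_min_two_max f.injective (by omega)
  have hv : [v₁, v₂, v₃, v₄].Nodup :=
    List.Pairwise.imp (R := (f · < f ·)) (fun h heq => h.ne (congrArg f heq))
      (by simp; omega)
  obtain ⟨W, hvW, hW, hbot, htop⟩ := exists_parityColouring_erase_ne e hm hv
  have hcol : ∀ v ∈ W, stepUpColour c ((W.map f).erase (f v)) = parityColouring e (W.erase v) :=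
    fun v hv => by rw [← map_erase]; exact hf _ (by rw [card_erase_of_mem hv, hW]; rfl)
  simp only [insert_subset_iff, singleton_subset_iff] at hvW
  apply htop
  rw [← hcol _ hvW.2.2.1, ← hcol _ hvW.2.2.2]
  refine stepUpColour_erase_eq_of_erase_ne c ?_ (by simp [hW]) h₁₂ h₃₄ ?_
    (by rwa [hcol _ hvW.1, hcol _ hvW.2.1])
  · simp [insert_subset_iff, hvW]
  · intro t ht
    simp only [mem_sdiff, mem_map, mem_insert, mem_singleton, not_or] at ht
    obtain ⟨⟨w, -, rfl⟩, hw⟩ := ht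
    exact hmid w <| by
      simp only [mem_insert, mem_singleton]; rintro (rfl | rfl | rfl | rfl) <;> simp at hw

/-- for every `k ≥ 3` there are a finite set `H` with `|H| ≥ k + 5` and a
2-colouring `χ` of the `(k+1)`-element subsets of `H` such that for every positive integer `n`
and every 2-colouring `c` of the `k`-element subsets of `{0, …, n-1}`, the step-up colouring
associated with `c` contains no copy of `(H, χ)`. -/
theorem stmt_11 (k : ℕ) (hk : 3 ≤ k) :
    ∃ (h : ℕ) (χ : Finset (Fin h) → Bool), k + 5 ≤ h ∧
      ∀ n : ℕ, 0 < n → ∀ c : Finset ℕ → Bool,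
        ¬ ∃ f : Fin h ↪ ℕ, (∀ x : Fin h, (f x) < 2 ^ n) ∧
          ∀ S : Finset (Fin h), S.card = k + 1 →
            stepUpColour c (S.map f) = χ S := by
  have hpow : k + 1 ≤ 2 ^ k := Nat.lt_two_pow_self
  have hcard : Fintype.card (Fin (2 ^ (k + 3))) = 2 ^ k * 8 := by simp [pow_add]
  let e : Fin (2 ^ (k + 3)) ≃ (Fin (k + 3) → ZMod 2) := Fintype.equivOfCardEq (by simp)
  refine ⟨2 ^ (k + 3), parityColouring e, by rw [pow_add]; omega, ?_⟩
  rintro n - c ⟨f, -, hf⟩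
  exact not_forall_stepUpColour_map_eq_parityColouring c e (m := k - 3) (by omega) f
    fun S hS => hf S (by omega)
end

section
/- For distinct natural numbers a, b, let δ(a, b) denote the largest index i such that the i-th binary digits of a and b differ. Let ε₁ < ε₂ < ⋯ < ε_h be natural numbers and set δ_l = δ(ε_l, ε_{l+1}) for 1 ≤ l ≤ h − 1. Then (i) δ_l ≠ δ_{l+1} for every 1 ≤ l ≤ h − 2, and (ii) for all 1 ≤ i < j ≤ h, δ(ε_i, ε_j) = max{δ_l : i ≤ l ≤ j − 1}. -/
/-!
Above the leading differing digit `δ(a, b)` the two numbers agree, so for `a < b` that digit is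
`0` in `a` and `1` in `b`. Hence for `a < b < c` the digit `δ(a, b)` of `b` is `1` while `δ(b, c)`
of `b` is `0`, which gives (i). Since `a ^^^ c = (a ^^^ b) ^^^ (b ^^^ c)` and the leading bits of
the two summands sit at the distinct positions `δ(a, b) ≠ δ(b, c)`, the leading bit of the XOR is
the higher of the two: `δ(a, c) = max (δ(a, b), δ(b, c))`, and (ii) follows by induction on `j`.
-/

namespace Nat

lemma testBit_log_two_self {n : ℕ} (hn : n ≠ 0) : n.testBit (Nat.log 2 n) = true := by
  rw [← log2_eq_log_two]
  exact testBit_log2 hn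

lemma testBit_eq_false_of_log_two_lt {n i : ℕ} (hi : Nat.log 2 n < i) : n.testBit i = false :=
  testBit_lt_two_pow <| (lt_pow_succ_log_self one_lt_two n).trans_le <|
    Nat.pow_le_pow_right two_pos hi

lemma log_two_xor_of_log_two_lt {x y : ℕ} (hxy : Nat.log 2 y < Nat.log 2 x) :
    Nat.log 2 (x ^^^ y) = Nat.log 2 x := by
  have hx : x ≠ 0 := by rintro rfl; simp at hxy
  refine log_eq_of_pow_le_of_lt_pow (ge_two_pow_of_testBit ?_) (xor_lt_two_pow ?_ ?_)
  · rw [testBit_xor, testBit_log_two_self hx, testBit_eq_false_of_log_two_lt hxy]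
    rfl
  · exact lt_pow_succ_log_self one_lt_two x
  · exact (lt_pow_succ_log_self one_lt_two y).trans_le (Nat.pow_le_pow_right two_pos (by omega))

lemma log_two_xor_of_log_two_ne {x y : ℕ} (hxy : Nat.log 2 x ≠ Nat.log 2 y) :
    Nat.log 2 (x ^^^ y) = max (Nat.log 2 x) (Nat.log 2 y) := by
  rcases hxy.lt_or_gt with hlt | hlt
  · rw [Nat.xor_comm, log_two_xor_of_log_two_lt hlt, max_eq_right hlt.le]
  · rw [log_two_xor_of_log_two_lt hlt, max_eq_left hlt.le]

end Nat

section stepDelta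

variable {a b c : ℕ}

lemma testBit_eq_of_stepDelta_lt {i : ℕ} (hi : stepDelta a b < i) :
    a.testBit i = b.testBit i := by
  simpa using Nat.testBit_eq_false_of_log_two_lt hi

lemma testBit_stepDelta_of_lt (hab : a < b) :
    a.testBit (stepDelta a b) = false ∧ b.testBit (stepDelta a b) = true := by
  have hne : a.testBit (stepDelta a b) ≠ b.testBit (stepDelta a b) := by
    simpa [stepDelta] using
      Nat.testBit_log_two_self (n := a ^^^ b) (by simpa [Nat.xor_eq_zero_iff] using hab.ne)
  have ha : a.testBit (stepDelta a b) = false := by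
    by_contra ha
    rw [Bool.not_eq_false] at ha
    have hb : b.testBit (stepDelta a b) = false := by simpa [ha] using hne.symm
    exact hab.not_gt (Nat.lt_of_testBit _ hb ha fun j hj => (testBit_eq_of_stepDelta_lt hj).symm)
  exact ⟨ha, by simpa [ha] using hne.symm⟩

lemma stepDelta_ne_of_lt_of_lt (hab : a < b) (hbc : b < c) : stepDelta a b ≠ stepDelta b c := by
  intro h
  have h₁ := (testBit_stepDelta_of_lt hab).2
  rw [h, (testBit_stepDelta_of_lt hbc).1] at h₁
  cases h₁

lemma stepDelta_eq_max_of_lt_of_lt (hab : a < b) (hbc : b < c) :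
    stepDelta a c = max (stepDelta a b) (stepDelta b c) := by
  have hxor : a ^^^ c = (a ^^^ b) ^^^ (b ^^^ c) := by
    rw [Nat.xor_assoc, ← Nat.xor_assoc b, Nat.xor_self, Nat.zero_xor]
  rw [stepDelta, hxor]
  exact Nat.log_two_xor_of_log_two_ne (stepDelta_ne_of_lt_of_lt hab hbc)

lemma stepDelta_eq_sup_Ico {ε : ℕ → ℕ} {i j : ℕ} (hε : StrictMonoOn ε (Set.Icc i j))
    (hij : i < j) :
    stepDelta (ε i) (ε j) = (Finset.Ico i j).sup fun l => stepDelta (ε l) (ε (l + 1)) := by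
  induction j, hij using Nat.le_induction with
  | base => simp
  | succ j hij ih =>
    have hεij : ε i < ε j := hε ⟨le_rfl, by omega⟩ ⟨by omega, by omega⟩ (by omega)
    have hεj : ε j < ε (j + 1) := hε ⟨by omega, by omega⟩ ⟨by omega, le_rfl⟩ j.lt_succ_self
    rw [stepDelta_eq_max_of_lt_of_lt hεij hεj, ih (hε.mono (Set.Icc_subset_Icc_right j.le_succ)),
      ← Finset.insert_Ico_right_eq_Ico_add_one (by omega), Finset.sup_insert, max_comm]

end stepDelta

/-- let `ε₁ < ε₂ < ⋯ < ε_h` be natural numbers and `δ_l = stepDelta ε_l ε_{l+1}`.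
Then (i) `δ_l ≠ δ_{l+1}` for `1 ≤ l ≤ h - 2`, and (ii) for `1 ≤ i < j ≤ h`,
`stepDelta ε_i ε_j = max {δ_l : i ≤ l ≤ j - 1}`. -/
theorem stmt_13 (h : ℕ) (ε : ℕ → ℕ)
    (hmono : ∀ l : ℕ, 1 ≤ l → l < h → ε l < ε (l + 1)) :
    (∀ l : ℕ, 1 ≤ l → l ≤ h - 2 →
      stepDelta (ε l) (ε (l + 1)) ≠ stepDelta (ε (l + 1)) (ε (l + 2))) ∧
    (∀ i j : ℕ, 1 ≤ i → i < j → j ≤ h →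
      stepDelta (ε i) (ε j) =
        (Finset.Icc i (j - 1)).sup fun l => stepDelta (ε l) (ε (l + 1))) := by
  have hstrict : StrictMonoOn ε (Set.Icc 1 h) :=
    strictMonoOn_of_lt_add_one Set.ordConnected_Icc fun l _ hl hl' => hmono l hl.1 hl'.2
  refine ⟨fun l hl hlh => ?_, fun i j hi hij hjh => ?_⟩
  · exact stepDelta_ne_of_lt_of_lt (hmono l hl (by omega)) (hmono (l + 1) (by omega) (by omega))
  · rw [Finset.Icc_sub_one_right_eq_Ico_of_not_isMin (not_isMin_of_lt hij)]
    exact stepDelta_eq_sup_Ico (hstrict.mono (Set.Icc_subset_Icc hi hjh)) hij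
end

section
/- For all integers k ≥ 3 and h ≥ k + 5, the inequality h! · (h−1)^{h−1} · 2^{C(h−1, k)} < 2^{C(h, k+1)} holds, where C(m, r) denotes the binomial coefficient m choose r. Equivalently, (h−1)^{h−1} · 2^{C(h−1,k)} < (1/h!) · 2^{C(h,k+1)}. -/
/-!
Write `m = h - 1`. Pascal's rule `C(m + 1, k + 1) = C(m, k) + C(m, k + 1)` cancels the factor
`2 ^ C(m, k)`, leaving `(m + 1)! · m ^ m < 2 ^ C(m, k + 1)`. Since `3 ≤ k + 1 ≤ m - 3`, unimodality
of binomial coefficients gives `C(m, 3) ≤ C(m, k + 1)`, and `(m + 1)! · m ^ m < 2 ^ C(m, 3)` for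
`m ≥ 7` follows by induction on `m`: passing from `m` to `m + 1` multiplies the left side by at most
`(m + 2)(m + 1) · 2 ^ m ≤ 2 ^ (2m + 1)` and the right side by `2 ^ C(m, 2)`. The base case
`8! · 7 ^ 7 < 2 ^ 35` holds with little room to spare.
-/

namespace Nat

theorem choose_le_choose_right_of_le_half {m a b : ℕ} (hab : a ≤ b) (hb : b ≤ m / 2) :
    m.choose a ≤ m.choose b := by
  induction b, hab using Nat.le_induction with
  | base => exact le_rfl
  | succ b _ ih => exact (ih (by omega)).trans (choose_le_succ_of_lt_half_left (by omega))

theorem choose_le_choose_right_of_le_of_add_le {m a r : ℕ} (har : a ≤ r) (hm : a + r ≤ m) :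
    m.choose a ≤ m.choose r := by
  rcases le_or_gt r (m / 2) with hr | hr
  · exact choose_le_choose_right_of_le_half har hr
  · rw [← choose_symm (show r ≤ m by omega)]
    exact choose_le_choose_right_of_le_half (by omega) (by omega)

theorem add_two_mul_add_one_le_two_pow {m : ℕ} (hm : 4 ≤ m) : (m + 2) * (m + 1) ≤ 2 ^ (m + 1) := by
  induction m, hm using Nat.le_induction with
  | base => norm_num
  | succ m _ ih =>
    calc (m + 3) * (m + 2) ≤ 2 * ((m + 2) * (m + 1)) := by nlinarith
      _ ≤ 2 * 2 ^ (m + 1) := Nat.mul_le_mul_left 2 ih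
      _ = 2 ^ (m + 2) := by ring

theorem two_mul_add_one_le_choose_two {m : ℕ} (hm : 6 ≤ m) : 2 * m + 1 ≤ m.choose 2 := by
  rw [choose_two_right, Nat.le_div_iff_mul_le two_pos]
  obtain ⟨n, rfl⟩ := Nat.exists_eq_add_of_le hm
  rw [show 6 + n - 1 = n + 5 by omega]
  nlinarith

theorem factorial_succ_mul_pow_self_lt_two_pow_choose_three {m : ℕ} (hm : 7 ≤ m) :
    (m + 1)! * m ^ m < 2 ^ m.choose 3 := by
  induction m, hm using Nat.le_induction with
  | base => norm_num [factorial, choose]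
  | succ m hm ih =>
    have hpow : (m + 1) ^ m ≤ 2 ^ m * m ^ m := by
      rw [← mul_pow]; exact Nat.pow_le_pow_left (by omega) m
    calc (m + 1 + 1)! * (m + 1) ^ (m + 1)
        = (m + 2) * (m + 1) * (m + 1) ^ m * (m + 1)! := by
          rw [factorial_succ, pow_succ]; ring
      _ ≤ (m + 2) * (m + 1) * (2 ^ m * m ^ m) * (m + 1)! := by gcongr
      _ = (m + 2) * (m + 1) * 2 ^ m * ((m + 1)! * m ^ m) := by ring
      _ < (m + 2) * (m + 1) * 2 ^ m * 2 ^ m.choose 3 := by gcongr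
      _ ≤ 2 ^ (m + 1) * 2 ^ m * 2 ^ m.choose 3 := by
          gcongr; exact add_two_mul_add_one_le_two_pow (by omega)
      _ = 2 ^ (2 * m + 1) * 2 ^ m.choose 3 := by ring
      _ ≤ 2 ^ m.choose 2 * 2 ^ m.choose 3 := by
          gcongr
          · norm_num
          · exact two_mul_add_one_le_choose_two (by omega)
      _ = 2 ^ (m + 1).choose 3 := by rw [choose_succ_succ', pow_add]

end Nat

open Nat in
/-- for all integers `k ≥ 3` and `h ≥ k + 5`,
`h! · (h-1)^(h-1) · 2^C(h-1, k) < 2^C(h, k+1)`. -/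
theorem stmt_15 (k h : ℕ) (hk : 3 ≤ k) (hh : k + 5 ≤ h) :
    Nat.factorial h * (h - 1) ^ (h - 1) * 2 ^ Nat.choose (h - 1) k <
      2 ^ Nat.choose h (k + 1) := by
  obtain ⟨m, rfl⟩ : ∃ m, h = m + 1 := ⟨h - 1, by omega⟩
  have hchoose : m.choose 3 ≤ m.choose (k + 1) :=
    choose_le_choose_right_of_le_of_add_le (by omega) (by omega)
  calc (m + 1)! * (m + 1 - 1) ^ (m + 1 - 1) * 2 ^ m.choose k
      = (m + 1)! * m ^ m * 2 ^ m.choose k := by rw [Nat.add_sub_cancel]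
    _ < 2 ^ m.choose 3 * 2 ^ m.choose k := by
        gcongr; exact factorial_succ_mul_pow_self_lt_two_pow_choose_three (by omega)
    _ ≤ 2 ^ m.choose (k + 1) * 2 ^ m.choose k := by gcongr; norm_num
    _ = 2 ^ (m + 1).choose (k + 1) := by rw [choose_succ_succ', pow_add, mul_comm]
end

section
/- Let k ≥ 3, let 𝒢₀ be a (k−1)-uniform hypergraph on the vertex set {1, 2, …, n}, and let m be a positive integer such that 𝒢₀ contains no complete and no empty (k−1)-partite subgraph with k−1 disjoint parts each of size m (i.e., there are no pairwise disjoint sets S₁, …, S_{k−1} ⊆ {1,…,n} each of size m such that every (k−1)-tuple with exactly one vertex in each part is an edge of 𝒢₀, or none is). Let 𝒢 be the k-uniform hypergraph on {1, 2, …, n} whose edges are exactly the k-tuples (i₁, …, i_k) with i₁ < ⋯ < i_k such that {i₁, …, i_{k−1}} is an edge of 𝒢₀. Then 𝒢 contains no complete and no empty k-partite subgraph with k disjoint parts each of size m. -/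
/-- `e` is an edge of the `k`-uniform hypergraph associated to a `(k-1)`-uniform hypergraph
`G₀` on `{1, …, n}`: the `k`-sets `{i₁ < ⋯ < i_k}` such that `{i₁, …, i_{k-1}}` (that is, `e`
with its maximum element removed) is an edge of `G₀`. -/
def liftHEdge {n : ℕ} (G₀ : Finset (Finset (Fin n))) (e : Finset (Fin n)) : Prop :=
  ∃ x ∈ e, (∀ y ∈ e, y ≤ x) ∧ e.erase x ∈ G₀

/-!
Let `S₁, …, S_k` be a complete or empty `k`-partite subgraph of `𝒢` and let `v` be the largest
vertex of `S₁ ∪ ⋯ ∪ S_k`, say `v ∈ S_j`. Every transversal of the remaining `k - 1` parts extends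
by `v` to a transversal of all `k` parts whose maximum is `v`, and it is an edge of `𝒢` exactly when
the original transversal is an edge of `𝒢₀`. So the parts other than `S_j` form a complete or
empty `(k-1)`-partite subgraph of `𝒢₀`.
-/

open Finset

theorem liftHEdge_insert_iff {n : ℕ} {G₀ : Finset (Finset (Fin n))} {s : Finset (Fin n)}
    {v : Fin n} (hv : v ∉ s) (hle : ∀ y ∈ s, y ≤ v) :
    liftHEdge G₀ (insert v s) ↔ s ∈ G₀ := by
  have hle' : ∀ y ∈ insert v s, y ≤ v := (forall_mem_insert _ _ _).2 ⟨le_rfl, hle⟩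
  constructor
  · rintro ⟨x, hx, hxmax, hxE⟩
    obtain rfl : x = v := (hle' x hx).antisymm (hxmax v (mem_insert_self v s))
    rwa [erase_insert hv] at hxE
  · intro hs
    exact ⟨v, mem_insert_self v s, hle', by rwa [erase_insert hv]⟩

theorem Fin.image_insertNth_univ {α : Type*} [DecidableEq α] {k : ℕ} (j : Fin (k + 1)) (v : α)
    (g : Fin k → α) : image (j.insertNth v g) univ = insert v (image g univ) :=
  coe_injective <| by
    simp only [coe_image, coe_univ, Set.image_univ, coe_insert, Fin.range_insertNth]; rfl

section Transversal

variable {α : Type*} {k : ℕ} {S : Fin (k + 1) → Finset α} {j : Fin (k + 1)} {v : α}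
  {g : Fin k → α}

theorem Fin.insertNth_mem_of_mem (hv : v ∈ S j) (hg : ∀ i, g i ∈ S (j.succAbove i)) :
    ∀ i, (j.insertNth v g : Fin (k + 1) → α) i ∈ S i :=
  (Fin.forall_iff_succAbove j).2 ⟨by simpa using hv, by simpa using hg⟩

theorem notMem_image_univ_of_disjoint [DecidableEq α]
    (hdisj : ∀ i i', i ≠ i' → Disjoint (S i) (S i')) (hv : v ∈ S j)
    (hg : ∀ i, g i ∈ S (j.succAbove i)) : v ∉ image g univ := by
  simp only [mem_image, mem_univ, true_and, not_exists]
  rintro i rfl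
  exact disjoint_left.1 (hdisj _ _ (j.succAbove_ne i)) (hg i) hv

end Transversal

theorem liftHEdge_image_insertNth_iff {n k : ℕ} {G₀ : Finset (Finset (Fin n))}
    {S : Fin (k + 1) → Finset (Fin n)} (hdisj : ∀ i i', i ≠ i' → Disjoint (S i) (S i'))
    {j : Fin (k + 1)} {v : Fin n} (hv : v ∈ S j) (hmax : ∀ i, ∀ y ∈ S i, y ≤ v)
    {g : Fin k → Fin n} (hg : ∀ i, g i ∈ S (j.succAbove i)) :
    liftHEdge G₀ (image (j.insertNth v g) univ) ↔ image g univ ∈ G₀ := by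
  rw [Fin.image_insertNth_univ]
  refine liftHEdge_insert_iff (notMem_image_univ_of_disjoint hdisj hv hg) ?_
  simp only [mem_image, mem_univ, true_and, forall_exists_index, forall_apply_eq_imp_iff]
  exact fun i => hmax _ _ (hg i)

theorem exists_mem_forall_le_of_nonempty {α ι : Type*} [LinearOrder α] [Fintype ι] [Nonempty ι]
    {S : ι → Finset α} (hne : ∀ i, (S i).Nonempty) :
    ∃ j, ∃ v ∈ S j, ∀ i, ∀ y ∈ S i, y ≤ v := by
  have hT : (univ.biUnion S).Nonempty := univ_nonempty.biUnion fun i _ => hne i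
  obtain ⟨j, -, hj⟩ := mem_biUnion.1 ((univ.biUnion S).max'_mem hT)
  exact ⟨j, _, hj, fun i y hy => le_max' _ _ (mem_biUnion.2 ⟨i, mem_univ i, hy⟩)⟩

theorem stmt_16_general (k n m : ℕ) (hk : 3 ≤ k) (hm : 0 < m)
    (G₀ : Finset (Finset (Fin n)))
    (hpart : ¬ ∃ S : Fin (k - 1) → Finset (Fin n),
      (∀ i j, i ≠ j → Disjoint (S i) (S j)) ∧ (∀ i, (S i).card = m) ∧
      ((∀ g : Fin (k - 1) → Fin n, (∀ i, g i ∈ S i) →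
          Finset.image g Finset.univ ∈ G₀) ∨
       (∀ g : Fin (k - 1) → Fin n, (∀ i, g i ∈ S i) →
          Finset.image g Finset.univ ∉ G₀))) :
    ¬ ∃ S : Fin k → Finset (Fin n),
      (∀ i j, i ≠ j → Disjoint (S i) (S j)) ∧ (∀ i, (S i).card = m) ∧
      ((∀ g : Fin k → Fin n, (∀ i, g i ∈ S i) →
          liftHEdge G₀ (Finset.image g Finset.univ)) ∨
       (∀ g : Fin k → Fin n, (∀ i, g i ∈ S i) →
          ¬ liftHEdge G₀ (Finset.image g Finset.univ))) := by
  obtain ⟨k, rfl⟩ : ∃ k', k = k' + 1 := ⟨k - 1, by omega⟩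
  rintro ⟨S, hdisj, hcard, hS⟩
  obtain ⟨j, v, hv, hmax⟩ :=
    exists_mem_forall_le_of_nonempty fun i => card_pos.1 ((hcard i).symm ▸ hm)
  have hlift : ∀ g : Fin k → Fin n, (∀ i, g i ∈ S (j.succAbove i)) →
      (liftHEdge G₀ (image (j.insertNth v g) univ) ↔ image g univ ∈ G₀) :=
    fun g hg => liftHEdge_image_insertNth_iff hdisj hv hmax hg
  refine hpart ⟨S ∘ j.succAbove, fun i i' hii' => hdisj _ _ (j.succAbove_right_injective.ne hii'),
    fun i => hcard _, ?_⟩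
  rcases hS with hall | hnone
  · exact .inl fun g hg => (hlift g hg).1 (hall _ (Fin.insertNth_mem_of_mem hv hg))
  · exact .inr fun g hg => (hlift g hg).not.1 (hnone _ (Fin.insertNth_mem_of_mem hv hg))

/-- let `k ≥ 3` and let `𝒢₀` be a `(k-1)`-uniform hypergraph on `{1, …, n}` with
no complete and no empty `(k-1)`-partite subgraph with parts of size `m`.  Then the `k`-uniform
hypergraph `𝒢` whose edges are the `k`-sets `i₁ < ⋯ < i_k` with `{i₁, …, i_{k-1}}` an edge of
`𝒢₀` contains no complete and no empty `k`-partite subgraph with parts of size `m`. -/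
theorem stmt_16 (k n m : ℕ) (hk : 3 ≤ k) (hm : 0 < m)
    (G₀ : Finset (Finset (Fin n))) (hG₀ : ∀ e ∈ G₀, e.card = k - 1)
    (hpart : ¬ ∃ S : Fin (k - 1) → Finset (Fin n),
      (∀ i j, i ≠ j → Disjoint (S i) (S j)) ∧ (∀ i, (S i).card = m) ∧
      ((∀ g : Fin (k - 1) → Fin n, (∀ i, g i ∈ S i) →
          Finset.image g Finset.univ ∈ G₀) ∨
       (∀ g : Fin (k - 1) → Fin n, (∀ i, g i ∈ S i) →
          Finset.image g Finset.univ ∉ G₀))) :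
    ¬ ∃ S : Fin k → Finset (Fin n),
      (∀ i j, i ≠ j → Disjoint (S i) (S j)) ∧ (∀ i, (S i).card = m) ∧
      ((∀ g : Fin k → Fin n, (∀ i, g i ∈ S i) →
          liftHEdge G₀ (Finset.image g Finset.univ)) ∨
       (∀ g : Fin k → Fin n, (∀ i, g i ∈ S i) →
          ¬ liftHEdge G₀ (Finset.image g Finset.univ))) :=
  stmt_16_general k n m hk hm G₀ hpart
end
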